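/- arXiv:2011.06136 — 4 statements merged into one kernel-verified Lean document; each statement's English description precedes it below -/
import Mathlib

section
/- For a real number x > 0 and an integer n ≥ 3, (x − 1)^{φ(n)} < Φ_n(x) < (x + 1)^{φ(n)}. -/
/-! Over `ℂ`, `Φ_n(x)` factors as `∏ (x - ζ)` over the primitive `n`-th roots of unity, and
`Φ_n(x) > 0`, so `Φ_n(x) = ∏ ‖x - ζ‖`. For `n ≥ 3` no such `ζ` is real, hence `|Re ζ| < 1`, and
`‖x - ζ‖² = x² - 2x Re ζ + 1` lies strictly between `(x - 1)²` and `(x + 1)²` when `x > 0`.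
Multiplying these `φ(n)` bounds gives the claim. -/

open Polynomial Finset

namespace Complex

lemma abs_re_lt_one_of_norm_eq_one {z : ℂ} (hz : ‖z‖ = 1) (h1 : z ≠ 1) (h2 : z ≠ -1) :
    |z.re| < 1 := by
  rw [← hz, abs_re_lt_norm]
  intro him
  have hre : |z.re| = 1 := hz ▸ abs_re_eq_norm.2 him
  rcases abs_eq (zero_le_one' ℝ) |>.1 hre with h | h
  · exact h1 (ext (by simpa using h) (by simpa using him))
  · exact h2 (ext (by simpa using h) (by simpa using him))

lemma norm_ofReal_sub_sq_of_norm_eq_one (x : ℝ) {z : ℂ} (hz : ‖z‖ = 1) :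
    ‖(x : ℂ) - z‖ ^ 2 = x ^ 2 - 2 * x * z.re + 1 := by
  have hz' : z.re * z.re + z.im * z.im = 1 := by
    rw [← normSq_apply, ← Complex.sq_norm, hz, one_pow]
  rw [Complex.sq_norm, normSq_apply]
  simp only [sub_re, sub_im, ofReal_re, ofReal_im]
  linear_combination hz'

lemma abs_sub_one_lt_norm_ofReal_sub {x : ℝ} (hx : 0 < x) {z : ℂ} (hz : ‖z‖ = 1)
    (hre : z.re < 1) : |x - 1| < ‖(x : ℂ) - z‖ :=
  lt_of_pow_lt_pow_left₀ 2 (norm_nonneg _) <| by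
    rw [sq_abs, norm_ofReal_sub_sq_of_norm_eq_one x hz]; nlinarith

lemma norm_ofReal_sub_lt_add_one {x : ℝ} (hx : 0 < x) {z : ℂ} (hz : ‖z‖ = 1)
    (hre : -1 < z.re) : ‖(x : ℂ) - z‖ < x + 1 :=
  lt_of_pow_lt_pow_left₀ 2 (by positivity) <| by
    rw [norm_ofReal_sub_sq_of_norm_eq_one x hz]; nlinarith

end Complex

lemma IsPrimitiveRoot.abs_re_lt_one {ζ : ℂ} {n : ℕ} (h : IsPrimitiveRoot ζ n) (hn : 3 ≤ n) :
    |ζ.re| < 1 := by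
  refine Complex.abs_re_lt_one_of_norm_eq_one (h.norm'_eq_one (by omega)) (h.ne_one (by omega)) ?_
  rintro rfl
  have := h.unique (IsPrimitiveRoot.neg_one 0 two_ne_zero.symm)
  omega

namespace Finset

variable {ι R : Type*} [CommSemiring R] [PartialOrder R] [IsStrictOrderedRing R]
  {s : Finset ι} {f : ι → R} {a : R}

lemma pow_card_lt_prod (hs : s.Nonempty) (ha : 0 ≤ a) (h : ∀ i ∈ s, a < f i) :
    a ^ #s < ∏ i ∈ s, f i := by
  rcases ha.eq_or_lt with rfl | ha
  · rw [zero_pow hs.card_ne_zero]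
    exact prod_pos fun i hi => h i hi
  · rw [← prod_const]
    exact prod_lt_prod_of_nonempty (fun _ _ => ha) h hs

lemma prod_lt_pow_card (hs : s.Nonempty) (hf : ∀ i ∈ s, 0 < f i) (h : ∀ i ∈ s, f i < a) :
    ∏ i ∈ s, f i < a ^ #s := by
  rw [← prod_const]
  exact prod_lt_prod_of_nonempty hf h hs

end Finset

namespace Polynomial

lemma abs_cyclotomic_eval_eq_prod_norm_sub {n : ℕ} (hn : 0 < n) (x : ℝ) :
    |(cyclotomic n ℝ).eval x| = ∏ ζ ∈ primitiveRoots n ℂ, ‖(x : ℂ) - ζ‖ := by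
  have hζ := Complex.isPrimitiveRoot_exp n hn.ne'
  rw [← Real.norm_eq_abs, ← Complex.norm_real, ← Complex.coe_algebraMap,
    ← cyclotomic.eval_apply x n (algebraMap ℝ ℂ), cyclotomic_eq_prod_X_sub_primitiveRoots hζ]
  simp [eval_prod, norm_prod]

end Polynomial

theorem cyclotomic_eval_bounds (x : ℝ) (hx : 0 < x) (n : ℕ) (hn : 3 ≤ n) :
    (x - 1) ^ n.totient < (Polynomial.cyclotomic n ℝ).eval x ∧
      (Polynomial.cyclotomic n ℝ).eval x < (x + 1) ^ n.totient := by
  have hn0 : 0 < n := by omega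
  have hne : (primitiveRoots n ℂ).Nonempty :=
    ⟨_, (mem_primitiveRoots hn0).2 (Complex.isPrimitiveRoot_exp n hn0.ne')⟩
  have hprod : (cyclotomic n ℝ).eval x = ∏ ζ ∈ primitiveRoots n ℂ, ‖(x : ℂ) - ζ‖ := by
    rw [← abs_cyclotomic_eval_eq_prod_norm_sub hn0, abs_of_pos (cyclotomic_pos (by omega) x)]
  have hroot : ∀ ζ ∈ primitiveRoots n ℂ, ‖ζ‖ = 1 ∧ |ζ.re| < 1 := fun ζ hζ => by
    have hζ := (mem_primitiveRoots hn0).1 hζ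
    exact ⟨hζ.norm'_eq_one hn0.ne', hζ.abs_re_lt_one hn⟩
  have hlower : ∀ ζ ∈ primitiveRoots n ℂ, |x - 1| < ‖(x : ℂ) - ζ‖ := fun ζ hζ =>
    Complex.abs_sub_one_lt_norm_ofReal_sub hx (hroot ζ hζ).1 (abs_lt.1 (hroot ζ hζ).2).2
  have hupper : ∀ ζ ∈ primitiveRoots n ℂ, ‖(x : ℂ) - ζ‖ < x + 1 := fun ζ hζ =>
    Complex.norm_ofReal_sub_lt_add_one hx (hroot ζ hζ).1 (abs_lt.1 (hroot ζ hζ).2).1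
  rw [hprod, ← Complex.card_primitiveRoots n]
  constructor
  · calc (x - 1) ^ #(primitiveRoots n ℂ) ≤ |x - 1| ^ #(primitiveRoots n ℂ) :=
          (le_abs_self _).trans (abs_pow _ _).le
      _ < _ := pow_card_lt_prod hne (abs_nonneg _) hlower
  · exact prod_lt_pow_card hne (fun ζ hζ => (abs_nonneg _).trans_lt (hlower ζ hζ)) hupper
end

section
/- Let a and b be coprime odd positive integers with a > b. Then v_2(Φ_n(a,b)) = v_2(a − b) if n = 1; v_2(Φ_n(a,b)) = v_2(a + b) if n = 2; v_2(Φ_n(a,b)) = 1 if n = 2^β with β ≥ 2; and v_2(Φ_n(a,b)) = 0 for all other positive integers n. -/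
/-- The homogenized `d`-th cyclotomic polynomial evaluated at `(a, b)`:
`Φ_d(a,b) = b^{φ(d)} Φ_d(a/b)`. -/
noncomputable def cycHom (d : ℕ) (a b : ℤ) : ℤ :=
  ∑ i ∈ Finset.range (d.totient + 1),
    (Polynomial.cyclotomic d ℤ).coeff i * a ^ i * b ^ (d.totient - i)

/-!
For odd `a` and `b` we have `a ≡ b ≡ 1 (mod 2)`, so `Φ_n(a,b) ≡ Φ_n(1,1) = Φ_n(1) (mod 2)`.
Now `Φ_n(1) = p` when `n` is a power of the prime `p` and `Φ_n(1) = 1` when `n` is not a prime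
power, so `Φ_n(a,b)` is odd unless `n` is a power of `2`. For `n = 2^(m+2)` we get
`Φ_n(a,b) = A² + B²` with `A = a^(2^m)`, `B = b^(2^m)` odd, and a sum of two odd squares is
`2 (mod 4)`.
-/

open Polynomial

lemma cycHom_one (a b : ℤ) : cycHom 1 a b = a - b := by
  simp [cycHom, Finset.sum_range_succ, coeff_one]
  ring

lemma cycHom_two (a b : ℤ) : cycHom 2 a b = a + b := by
  simp [cycHom, Finset.sum_range_succ, coeff_one]
  ring

lemma cycHom_two_pow_succ (k : ℕ) (a b : ℤ) :
    cycHom (2 ^ (k + 1)) a b = a ^ 2 ^ k + b ^ 2 ^ k := by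
  have hcyc : cyclotomic (2 ^ (k + 1)) ℤ = 1 + X ^ 2 ^ k := by
    simp [cyclotomic_prime_pow_eq_geom_sum Nat.prime_two, Finset.sum_range_succ]
  have htot : (2 ^ (k + 1)).totient = 2 ^ k := by
    simp [Nat.totient_prime_pow_succ Nat.prime_two]
  rw [cycHom, htot, hcyc, Finset.sum_range_succ]
  simp [coeff_one, coeff_X_pow, add_mul, Finset.sum_add_distrib]
  exact add_comm _ _

lemma cycHom_one_one (n : ℕ) : cycHom n 1 1 = (cyclotomic n ℤ).eval 1 := by
  rw [eval_eq_sum_range, cycHom]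
  rcases n.eq_zero_or_pos with rfl | hn
  · simp
  · simp [natDegree_cyclotomic]

lemma Int.ModEq.cycHom {m a a' b b' : ℤ} (n : ℕ) (ha : a ≡ a' [ZMOD m]) (hb : b ≡ b' [ZMOD m]) :
    cycHom n a b ≡ cycHom n a' b' [ZMOD m] :=
  Int.ModEq.sum fun i _ => ((ha.pow i).mul_left _).mul (hb.pow _)

lemma odd_eval_one_cyclotomic {n : ℕ} (hn : ∀ k, n ≠ 2 ^ k) :
    Odd ((cyclotomic n ℤ).eval 1) := by
  by_cases hpow : ∃ p k, p.Prime ∧ n = p ^ (k + 1)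
  · obtain ⟨p, k, hp, rfl⟩ := hpow
    have : Fact p.Prime := ⟨hp⟩
    have hp2 : p ≠ 2 := by rintro rfl; exact hn _ rfl
    rw [eval_one_cyclotomic_prime_pow]
    exact_mod_cast hp.odd_of_ne_two hp2
  · rw [eval_one_cyclotomic_not_prime_pow]
    · exact odd_one
    · rintro p hp (_ | k) hk
      · exact hn 0 hk.symm
      · exact hpow ⟨p, k, hp, hk.symm⟩

lemma odd_cycHom {n : ℕ} (hn : ∀ k, n ≠ 2 ^ k) {a b : ℤ} (ha : Odd a) (hb : Odd b) :
    Odd (cycHom n a b) := by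
  have hcong : cycHom n a b ≡ cycHom n 1 1 [ZMOD 2] :=
    Int.ModEq.cycHom n (Int.odd_iff.mp ha) (Int.odd_iff.mp hb)
  rw [cycHom_one_one] at hcong
  have hΦ : (cyclotomic n ℤ).eval 1 ≡ 1 [ZMOD 2] := Int.odd_iff.mp (odd_eval_one_cyclotomic hn)
  exact Int.odd_iff.mpr (hcong.trans hΦ)

lemma padicValInt_two_eq_zero_of_odd {u : ℤ} (hu : Odd u) : padicValInt 2 u = 0 :=
  padicValInt.eq_zero_of_not_dvd fun h => Int.not_even_iff_odd.mpr hu (even_iff_two_dvd.mpr h)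

lemma padicValInt_two_mul_of_odd {u : ℤ} (hu : Odd u) : padicValInt 2 (2 * u) = 1 := by
  have hu0 : u ≠ 0 := by rintro rfl; simp at hu
  simpa [mul_comm, padicValInt_two_eq_zero_of_odd hu] using padicValInt_mul_eq_succ (p := 2) u hu0

lemma padicValInt_two_sq_add_sq {x y : ℤ} (hx : Odd x) (hy : Odd y) :
    padicValInt 2 (x ^ 2 + y ^ 2) = 1 := by
  obtain ⟨s, rfl⟩ := hx
  obtain ⟨t, rfl⟩ := hy
  have hsum : (2 * s + 1) ^ 2 + (2 * t + 1) ^ 2 = 2 * (2 * (s ^ 2 + s + t ^ 2 + t) + 1) := by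
    ring
  rw [hsum, padicValInt_two_mul_of_odd (odd_two_mul_add_one _)]

theorem padicValInt_two_cycHom_general (a b : ℕ) (ha : Odd a) (hbo : Odd b) :
    padicValInt 2 (cycHom 1 (a : ℤ) (b : ℤ)) = padicValInt 2 ((a : ℤ) - (b : ℤ)) ∧
      padicValInt 2 (cycHom 2 (a : ℤ) (b : ℤ)) = padicValInt 2 ((a : ℤ) + (b : ℤ)) ∧
      (∀ β : ℕ, 2 ≤ β → padicValInt 2 (cycHom (2 ^ β) (a : ℤ) (b : ℤ)) = 1) ∧
      ∀ n : ℕ, 1 ≤ n → n ≠ 1 → n ≠ 2 → (∀ β : ℕ, 2 ≤ β → n ≠ 2 ^ β) →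
        padicValInt 2 (cycHom n (a : ℤ) (b : ℤ)) = 0 := by
  have haz : Odd (a : ℤ) := by exact_mod_cast ha
  have hbz : Odd (b : ℤ) := by exact_mod_cast hbo
  refine ⟨by rw [cycHom_one], by rw [cycHom_two], fun β hβ => ?_, fun n _ hn1 hn2 hn => ?_⟩
  · obtain ⟨m, rfl⟩ := Nat.exists_eq_add_of_le' hβ
    rw [cycHom_two_pow_succ, pow_succ 2 m, pow_mul, pow_mul]
    exact padicValInt_two_sq_add_sq haz.pow hbz.pow
  · have hn_ne_pow : ∀ k, n ≠ 2 ^ k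
      | 0 => hn1
      | 1 => hn2
      | k + 2 => hn (k + 2) le_add_self
    exact padicValInt_two_eq_zero_of_odd (odd_cycHom hn_ne_pow haz hbz)

theorem padicValInt_two_cycHom (a b : ℕ) (hb : 1 ≤ b) (hab : b < a)
    (hco : Nat.Coprime a b) (ha : Odd a) (hbo : Odd b) :
    padicValInt 2 (cycHom 1 (a : ℤ) (b : ℤ)) = padicValInt 2 ((a : ℤ) - (b : ℤ)) ∧
      padicValInt 2 (cycHom 2 (a : ℤ) (b : ℤ)) = padicValInt 2 ((a : ℤ) + (b : ℤ)) ∧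
      (∀ β : ℕ, 2 ≤ β → padicValInt 2 (cycHom (2 ^ β) (a : ℤ) (b : ℤ)) = 1) ∧
      ∀ n : ℕ, 1 ≤ n → n ≠ 1 → n ≠ 2 → (∀ β : ℕ, 2 ≤ β → n ≠ 2 ^ β) →
        padicValInt 2 (cycHom n (a : ℤ) (b : ℤ)) = 0 :=
  padicValInt_two_cycHom_general a b ha hbo
end

section
/- Let a > b ≥ 1 be coprime integers and n ≥ 3. If (n + 1)·P(n) < Φ_n(a, b), where P(n) is the largest prime divisor of n, then (a, b, n) has a large Zsigmondy prime. -/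
/-- `p` is a Zsigmondy prime for `(a, b, n)`. -/
def IsZsigmondyPrime (a b n p : ℕ) : Prop :=
  p.Prime ∧ (p : ℤ) ∣ (a : ℤ) ^ n - (b : ℤ) ^ n ∧
    ∀ m : ℕ, 1 ≤ m → m < n → ¬ (p : ℤ) ∣ (a : ℤ) ^ m - (b : ℤ) ^ m

/-- `p` is a large Zsigmondy prime for `(a, b, n)`. -/
def IsLargeZsigmondyPrime (a b n p : ℕ) : Prop :=
  IsZsigmondyPrime a b n p ∧
    ((p : ℤ) ^ 2 ∣ (a : ℤ) ^ n - (b : ℤ) ^ n ∨ p > n + 1)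

/-! Let `q` be a prime dividing `Φ_n(a, b)`. Then `q ∤ b`, and `a / b` is a primitive root of
unity modulo `q` whose order is the `q`-free part `n'` of `n`, so `n' ∣ q - 1`. If `q ∤ n`, then
`q` is a Zsigmondy prime with `q ≡ 1 (mod n)`. If `q ∣ n`, the other prime factors of `n` divide
`n' < q`, so `q = P(n)`; and since `(a^{n/q} - b^{n/q}) Φ_n(a, b)` divides `a^n - b^n`, whose
`q`-adic valuation exceeds that of `a^{n/q} - b^{n/q}` by exactly one (lifting the exponent),
`q² ∤ Φ_n(a, b)`. Without a large Zsigmondy prime, `Φ_n(a, b)` is therefore squarefree with prime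
factors in `{n + 1, P(n)}`, so `Φ_n(a, b) ≤ (n + 1) P(n)`. -/

open Polynomial

lemma cycHom_cast {K : Type*} [Field K] (d : ℕ) (a b : ℤ) (hb : (b : K) ≠ 0) :
    (cycHom d a b : K) = (b : K) ^ d.totient * (cyclotomic d K).eval ((a : K) / b) := by
  rw [eval_eq_sum_range, natDegree_cyclotomic, Finset.mul_sum, cycHom]
  push_cast
  refine Finset.sum_congr rfl fun i hi => ?_
  have hi : i ≤ d.totient := Nat.lt_succ_iff.mp (Finset.mem_range.mp hi)
  rw [← map_cyclotomic d (Int.castRingHom K), coeff_map, eq_intCast, div_pow]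
  field_simp
  rw [mul_assoc, ← pow_add, Nat.sub_add_cancel hi]

lemma prod_cycHom {n : ℕ} (hn : 0 < n) (a : ℤ) {b : ℤ} (hb : b ≠ 0) :
    ∏ d ∈ n.divisors, cycHom d a b = a ^ n - b ^ n := by
  have hbQ : (b : ℚ) ≠ 0 := Int.cast_ne_zero.mpr hb
  suffices ((∏ d ∈ n.divisors, cycHom d a b : ℤ) : ℚ) = ((a ^ n - b ^ n : ℤ) : ℚ) from
    mod_cast this
  rw [Int.cast_prod, Finset.prod_congr rfl fun d _ => cycHom_cast d a b hbQ,
    Finset.prod_mul_distrib, ← eval_prod, prod_cyclotomic_eq_X_pow_sub_one hn,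
    Finset.prod_pow_eq_pow_sum, Nat.sum_totient]
  simp only [eval_sub, eval_pow, eval_X, eval_one, div_pow]
  field_simp
  push_cast
  ring

lemma cycHom_dvd_sub_pow {n : ℕ} (hn : 0 < n) (a : ℤ) {b : ℤ} (hb : b ≠ 0) :
    cycHom n a b ∣ a ^ n - b ^ n := by
  rw [← prod_cycHom hn a hb]
  exact Finset.dvd_prod_of_mem _ (Nat.mem_divisors_self n hn.ne')

lemma sub_pow_mul_cycHom_dvd {n t : ℕ} (ht : 0 < t) (htn : t ∣ n) (hlt : t < n)
    (a : ℤ) {b : ℤ} (hb : b ≠ 0) :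
    (a ^ t - b ^ t) * cycHom n a b ∣ a ^ n - b ^ n := by
  have hn : 0 < n := ht.trans hlt
  rw [← prod_cycHom hn a hb, ← prod_cycHom ht a hb,
    ← Finset.mul_prod_erase _ _ (Nat.mem_divisors_self n hn.ne'), mul_comm]
  refine mul_dvd_mul_left _ (Finset.prod_dvd_prod_of_subset _ _ _ fun d hd => ?_)
  have hdt := Nat.dvd_of_mem_divisors hd
  exact Finset.mem_erase.mpr ⟨(Nat.le_of_dvd ht hdt).trans_lt hlt |>.ne,
    Nat.mem_divisors.mpr ⟨hdt.trans htn, hn.ne'⟩⟩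

lemma not_dvd_right_of_dvd_cycHom {n : ℕ} (hn : 0 < n) {a b p : ℤ} (hco : IsCoprime a b)
    (hb : b ≠ 0) (hp : ¬ IsUnit p) (h : p ∣ cycHom n a b) : ¬ p ∣ b := fun hpb =>
  have hpbn : p ∣ b ^ n := hpb.trans (dvd_pow_self b hn.ne')
  have hpan : p ∣ a ^ n := by
    simpa using dvd_add (h.trans (cycHom_dvd_sub_pow hn a hb)) hpbn
  hp ((hco.pow (m := n) (n := n)).isUnit_of_dvd' hpan hpbn)

lemma Int.four_dvd_pow_sub_pow_of_odd {x y : ℤ} (hx : Odd x) (hy : Odd y) {t : ℕ}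
    (ht : Even t) : 4 ∣ x ^ t - y ^ t := by
  obtain ⟨s, rfl⟩ := ht
  rw [← two_mul, pow_mul', pow_mul', Int.dvd_iff_emod_eq_zero, Int.sub_emod,
    Int.sq_mod_four_eq_one_of_odd hx.pow, Int.sq_mod_four_eq_one_of_odd hy.pow]
  rfl

lemma Int.emultiplicity_pow_prime_sub_pow {q : ℕ} (hq : q.Prime) {x y : ℤ}
    (hxy : (q : ℤ) ∣ x - y) (hx : ¬ (q : ℤ) ∣ x) (h2 : q = 2 → 4 ∣ x - y) :
    emultiplicity (q : ℤ) (x ^ q - y ^ q) = emultiplicity (q : ℤ) (x - y) + 1 := by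
  rcases hq.eq_two_or_odd' with rfl | hodd
  · have h22 : emultiplicity (2 : ℤ) 2 = 1 := by
      simpa using emultiplicity_pow_self_of_prime Int.prime_two 1
    simpa [h22] using Int.two_pow_sub_pow' 2 (h2 rfl) (by exact_mod_cast hx)
  · rw [Int.emultiplicity_pow_sub_pow hq hodd hxy hx, hq.emultiplicity_self]

lemma not_sq_dvd_cycHom_prime_mul {q t : ℕ} (hq : q.Prime) (ht : 0 < t) {a b : ℤ}
    (hab : a ^ t ≠ b ^ t) (hqt : (q : ℤ) ∣ a ^ t - b ^ t) (hqb : ¬ (q : ℤ) ∣ b)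
    (h2 : q = 2 → 4 ∣ a ^ t - b ^ t) : ¬ (q : ℤ) ^ 2 ∣ cycHom (q * t) a b := by
  intro hsq
  have hb : b ≠ 0 := by rintro rfl; exact hqb (dvd_zero _)
  have hqP : Prime (q : ℤ) := Nat.prime_iff_prime_int.mp hq
  have hqa : ¬ (q : ℤ) ∣ a ^ t := fun hqa =>
    hqb (hqP.dvd_of_dvd_pow (by simpa using dvd_sub hqa hqt))
  have hdvd : (a ^ t - b ^ t) * (q : ℤ) ^ 2 ∣ (a ^ t) ^ q - (b ^ t) ^ q := by
    rw [← pow_mul, ← pow_mul, mul_comm t]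
    exact (mul_dvd_mul_left _ hsq).trans <| sub_pow_mul_cycHom_dvd ht (dvd_mul_left t q)
      (lt_mul_left ht hq.one_lt) a hb
  have hfin : FiniteMultiplicity (q : ℤ) (a ^ t - b ^ t) :=
    Int.finiteMultiplicity_iff.mpr ⟨by simpa using hq.ne_one, sub_ne_zero.mpr hab⟩
  have hle := emultiplicity_le_emultiplicity_of_dvd_right (a := (q : ℤ)) hdvd
  rw [emultiplicity_mul hqP, emultiplicity_pow_self_of_prime hqP,
    Int.emultiplicity_pow_prime_sub_pow hq hqt hqa h2, hfin.emultiplicity_eq_multiplicity]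
    at hle
  exact absurd (mod_cast hle : multiplicity (q : ℤ) (a ^ t - b ^ t) + 2 ≤ _ + 1) (by omega)

section ZModPrime

variable {q : ℕ} [Fact q.Prime] {a b : ℤ}

lemma dvd_cycHom_iff_isRoot {n : ℕ} (hb : ¬ (q : ℤ) ∣ b) :
    (q : ℤ) ∣ cycHom n a b ↔ (cyclotomic n (ZMod q)).IsRoot ((a : ZMod q) / b) := by
  rw [← ZMod.intCast_zmod_eq_zero_iff_dvd] at hb ⊢
  rw [cycHom_cast n a b hb, mul_eq_zero, IsRoot.def]
  simp [pow_ne_zero _ hb]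

lemma dvd_sub_pow_iff (hb : ¬ (q : ℤ) ∣ b) (m : ℕ) :
    (q : ℤ) ∣ a ^ m - b ^ m ↔ ((a : ZMod q) / b) ^ m = 1 := by
  rw [← ZMod.intCast_zmod_eq_zero_iff_dvd] at hb ⊢
  push_cast
  rw [sub_eq_zero, div_pow, div_eq_one_iff_eq (pow_ne_zero m hb)]

lemma isPrimitiveRoot_ordCompl_of_dvd_cycHom {n : ℕ} (hn : n ≠ 0) (hb : ¬ (q : ℤ) ∣ b)
    (h : (q : ℤ) ∣ cycHom n a b) : IsPrimitiveRoot ((a : ZMod q) / b) (ordCompl[q] n) := by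
  have : NeZero ((ordCompl[q] n : ℕ) : ZMod q) :=
    ⟨by rw [Ne, ZMod.natCast_eq_zero_iff]; exact Nat.not_dvd_ordCompl Fact.out hn⟩
  rw [dvd_cycHom_iff_isRoot hb, ← Nat.ordProj_mul_ordCompl_eq_self n q] at h
  exact isRoot_cyclotomic_prime_pow_mul_iff_of_charP.mp h

lemma ordCompl_dvd_sub_one_of_dvd_cycHom {n : ℕ} (hn : n ≠ 0) (hb : ¬ (q : ℤ) ∣ b)
    (h : (q : ℤ) ∣ cycHom n a b) : ordCompl[q] n ∣ q - 1 := by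
  have hprim := isPrimitiveRoot_ordCompl_of_dvd_cycHom hn hb h
  exact hprim.eq_orderOf ▸ ZMod.orderOf_dvd_card_sub_one
    (hprim.ne_zero (Nat.ordCompl_pos q hn).ne')

lemma dvd_sub_pow_iff_ordCompl_dvd {n : ℕ} (hn : n ≠ 0) (hb : ¬ (q : ℤ) ∣ b)
    (h : (q : ℤ) ∣ cycHom n a b) (m : ℕ) : (q : ℤ) ∣ a ^ m - b ^ m ↔ ordCompl[q] n ∣ m := by
  rw [dvd_sub_pow_iff hb, (isPrimitiveRoot_ordCompl_of_dvd_cycHom hn hb h).pow_eq_one_iff_dvd]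

end ZModPrime

lemma Nat.sup_primeFactors_eq_of_ordCompl_lt {n q : ℕ} (hq : q.Prime) (hqn : q ∣ n) (hn : n ≠ 0)
    (hlt : ordCompl[q] n < q) : n.primeFactors.sup id = q := by
  refine le_antisymm (Finset.sup_le fun r hr => ?_)
    (Finset.le_sup (f := id) (Nat.mem_primeFactors.mpr ⟨hq, hqn, hn⟩))
  obtain ⟨hr, hrn, -⟩ := Nat.mem_primeFactors.mp hr
  rw [← Nat.ordProj_mul_ordCompl_eq_self n q] at hrn
  rcases (Nat.Prime.dvd_mul hr).mp hrn with hrq | hrm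
  · exact ((Nat.prime_dvd_prime_iff_eq hr hq).mp (hr.dvd_of_dvd_pow hrq)).le
  · exact ((Nat.le_of_dvd (Nat.ordCompl_pos q hn) hrm).trans_lt hlt).le

lemma isZsigmondyPrime_of_dvd_cycHom {a b n q : ℕ} (hn : n ≠ 0) (hq : q.Prime)
    (hqb : ¬ (q : ℤ) ∣ b) (h : (q : ℤ) ∣ cycHom n a b) (hqn : ¬ q ∣ n) :
    IsZsigmondyPrime a b n q ∧ n + 1 ≤ q := by
  have : Fact q.Prime := ⟨hq⟩
  have hord : ordCompl[q] n = n := (Nat.ordCompl_eq_self_iff_zero_or_not_dvd n hq).2 (.inr hqn)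
  have hiff := dvd_sub_pow_iff_ordCompl_dvd hn hqb h
  have hsub := ordCompl_dvd_sub_one_of_dvd_cycHom hn hqb h
  rw [hord] at hiff hsub
  refine ⟨⟨hq, (hiff n).2 dvd_rfl, fun m hm hmn hqm => ?_⟩, ?_⟩
  · exact absurd (Nat.le_of_dvd hm ((hiff m).1 hqm)) (by omega)
  · have := Nat.le_of_dvd (Nat.sub_pos_of_lt hq.one_lt) hsub
    omega

lemma eq_sup_primeFactors_of_dvd_cycHom {n q : ℕ} {a b : ℤ} (hn : n ≠ 0) (hq : q.Prime)
    (hqb : ¬ (q : ℤ) ∣ b) (h : (q : ℤ) ∣ cycHom n a b) (hqn : q ∣ n) :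
    q = n.primeFactors.sup id := by
  have : Fact q.Prime := ⟨hq⟩
  have hle := Nat.le_of_dvd (Nat.sub_pos_of_lt hq.one_lt)
    (ordCompl_dvd_sub_one_of_dvd_cycHom hn hqb h)
  have hpos := Nat.ordCompl_pos q hn
  exact (Nat.sup_primeFactors_eq_of_ordCompl_lt hq hqn hn (by omega)).symm

lemma not_sq_dvd_cycHom_of_dvd {a b n q : ℕ} (hab : b < a) (hn : 3 ≤ n) (hq : q.Prime)
    (hqb : ¬ (q : ℤ) ∣ b) (h : (q : ℤ) ∣ cycHom n a b) (hqn : q ∣ n) :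
    ¬ (q : ℤ) ^ 2 ∣ cycHom n a b := by
  have : Fact q.Prime := ⟨hq⟩
  obtain ⟨t, rfl⟩ := hqn
  have hn0 : q * t ≠ 0 := by omega
  have ht : 0 < t := Nat.pos_of_mul_pos_left (by omega : 0 < q * t)
  have hiff := dvd_sub_pow_iff_ordCompl_dvd hn0 hqb h
  have hqt : (q : ℤ) ∣ (a : ℤ) ^ t - (b : ℤ) ^ t := (hiff t).2 <|
    (Nat.coprime_ordCompl hq hn0).symm.dvd_of_dvd_mul_left (Nat.ordCompl_dvd (q * t) q)
  refine not_sq_dvd_cycHom_prime_mul hq ht (by exact_mod_cast (Nat.pow_lt_pow_left hab ht.ne').ne')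
    hqt hqb fun hq2 => ?_
  subst hq2
  -- `ordCompl[2] (2 * t) ∣ 2 - 1` makes `2 * t ≥ 3` a power of two.
  have ht_even : Even t := by
    by_contra hodd
    have hord : ordCompl[2] (2 * t) = t := by
      have := Nat.ordCompl_self_pow_mul t 1 Nat.prime_two
      rw [pow_one] at this
      rw [this, Nat.ordCompl_eq_self_iff_zero_or_not_dvd t Nat.prime_two]
      exact .inr (by rwa [← even_iff_two_dvd])
    have := ordCompl_dvd_sub_one_of_dvd_cycHom hn0 hqb h
    rw [hord, Nat.dvd_one] at this
    omega
  have hb_odd : Odd (b : ℤ) := by rwa [← Int.not_even_iff_odd, even_iff_two_dvd]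
  have ha_odd : Odd (a : ℤ) := by
    have := (hb_odd.pow (n := t)).add_even (even_iff_two_dvd.mpr hqt)
    rw [add_sub_cancel] at this
    exact (Int.odd_pow.mp this).resolve_right ht.ne'
  exact Int.four_dvd_pow_sub_pow_of_odd ha_odd hb_odd ht_even

lemma Int.natAbs_dvd_prod_of_forall_prime_dvd {N : ℤ} {s : Finset ℕ}
    (h : ∀ q : ℕ, q.Prime → (q : ℤ) ∣ N → q ∈ s ∧ ¬ (q : ℤ) ^ 2 ∣ N) :
    N.natAbs ∣ ∏ p ∈ s, p := by
  have hsqf : Squarefree N.natAbs := Nat.squarefree_iff_prime_squarefree.mpr fun q hq hqq =>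
    (h q hq (Int.natCast_dvd.mpr ((dvd_mul_right q q).trans hqq))).2
      (mod_cast Int.natCast_dvd.mpr (by rwa [sq] : q ^ 2 ∣ N.natAbs))
  rw [← Nat.prod_primeFactors_of_squarefree hsqf]
  refine Finset.prod_dvd_prod_of_subset _ _ _ fun q hq => ?_
  obtain ⟨hq, hqN, -⟩ := Nat.mem_primeFactors.mp hq
  exact (h q hq (Int.natCast_dvd.mpr hqN)).1

lemma mem_pair_and_not_sq_dvd_of_dvd_cycHom {a b n q : ℕ} (hb : b ≠ 0) (hab : b < a)
    (hco : a.Coprime b) (hn : 3 ≤ n) (hnone : ∀ p, ¬ IsLargeZsigmondyPrime a b n p)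
    (hq : q.Prime) (h : (q : ℤ) ∣ cycHom n a b) :
    q ∈ ({n + 1, n.primeFactors.sup id} : Finset ℕ) ∧ ¬ (q : ℤ) ^ 2 ∣ cycHom n a b := by
  have hqb : ¬ (q : ℤ) ∣ b := not_dvd_right_of_dvd_cycHom (by omega)
    (Nat.isCoprime_iff_coprime.mpr hco) (by exact_mod_cast hb)
    (Int.isUnit_iff_natAbs_eq.not.mpr (by simpa using hq.ne_one)) h
  by_cases hqn : q ∣ n
  · exact ⟨by simp [eq_sup_primeFactors_of_dvd_cycHom (by omega) hq hqb h hqn],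
      not_sq_dvd_cycHom_of_dvd hab hn hq hqb h hqn⟩
  obtain ⟨hzs, hqn1⟩ := isZsigmondyPrime_of_dvd_cycHom (by omega) hq hqb h hqn
  have hsmall : ¬ ((q : ℤ) ^ 2 ∣ (a : ℤ) ^ n - (b : ℤ) ^ n ∨ q > n + 1) :=
    fun hlarge => hnone q ⟨hzs, hlarge⟩
  push Not at hsmall
  exact ⟨by simp [le_antisymm hsmall.2 hqn1], fun hsq => hsmall.1 <|
    hsq.trans (cycHom_dvd_sub_pow (by omega) _ (by exact_mod_cast hb))⟩

theorem large_zsigmondy_of_cycHom_large (a b n : ℕ) (hb : 1 ≤ b) (hab : b < a)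
    (hco : Nat.Coprime a b) (hn : 3 ≤ n)
    (h : ((n + 1) * (n.primeFactors.sup id) : ℤ) < cycHom n (a : ℤ) (b : ℤ)) :
    ∃ p : ℕ, IsLargeZsigmondyPrime a b n p := by
  by_contra hnone
  push Not at hnone
  have hP : n.primeFactors.sup id ≤ n :=
    Finset.sup_le fun r hr => Nat.le_of_dvd (by omega) (Nat.dvd_of_mem_primeFactors hr)
  have hP0 : 0 < n.primeFactors.sup id := Finset.lt_sup_iff.mpr ⟨n.minFac,
    Nat.mem_primeFactors.mpr ⟨Nat.minFac_prime (by omega), n.minFac_dvd, by omega⟩,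
    (Nat.minFac_prime (by omega)).pos⟩
  have hdvd := Int.natAbs_dvd_prod_of_forall_prime_dvd fun q hq hqN =>
    mem_pair_and_not_sq_dvd_of_dvd_cycHom (by omega) hab hco hn hnone hq hqN
  rw [Finset.prod_pair (by omega)] at hdvd
  have hle : ((cycHom n a b).natAbs : ℤ) ≤ ((n + 1) * n.primeFactors.sup id : ℕ) :=
    mod_cast Nat.le_of_dvd (by positivity) hdvd
  push_cast at hle
  linarith [le_abs_self (cycHom n a b)]
end

section
/- Let a > b ≥ 1 be coprime integers. The triple (a, b, 2) has a large Zsigmondy prime if and only if a + b is not of the form 2^s·3^t with s ≥ 0 and t ∈ {0, 1}. -/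
theorem IsCoprime.dvd_sub_iff_dvd_two {R : Type*} [CommRing R] {a b d : R}
    (hab : IsCoprime a b) (hd : d ∣ a + b) : d ∣ a - b ↔ d ∣ 2 := by
  obtain ⟨u, v, huv⟩ := hab
  constructor
  · intro hd'
    have h2 : (2 : R) = (u + v) * (a + b) + (u - v) * (a - b) := by
      linear_combination (-2 : R) * huv
    rw [h2]
    exact dvd_add (dvd_mul_of_dvd_right hd _) (dvd_mul_of_dvd_right hd' _)
  · intro h2
    have h : a - b = (a + b) - 2 * b := by ring
    rw [h]
    exact dvd_sub hd (dvd_mul_of_dvd_left h2 _)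

namespace Nat

theorem exists_eq_two_pow_mul_three_pow {N : ℕ} (hN : N ≠ 0)
    (hprime : ∀ p, p.Prime → p ∣ N → p ≤ 3) (h9 : ¬ 9 ∣ N) :
    ∃ s t : ℕ, t ≤ 1 ∧ N = 2 ^ s * 3 ^ t := by
  obtain ⟨s, m, hm, rfl⟩ := exists_eq_two_pow_mul_odd hN
  have hm3 : m = 3 ^ m.primeFactorsList.length := by
    refine eq_prime_pow_of_unique_prime_dvd (by rintro rfl; simp at hm) fun {p} hp hpm => ?_
    have hp2 : p ≠ 2 := by
      rintro rfl
      exact not_even_iff_odd.mpr hm (even_iff_two_dvd.mpr hpm)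
    have := hprime p hp (dvd_mul_of_dvd_right hpm _)
    have := hp.two_le
    omega
  refine ⟨s, _, ?_, congrArg _ hm3⟩
  by_contra! ht
  exact h9 (dvd_mul_of_dvd_right (hm3 ▸ pow_dvd_pow 3 ht) _)

theorem not_sq_dvd_two_pow_mul_three_pow {s t : ℕ} (ht : t ≤ 1) :
    ¬ 3 ^ 2 ∣ 2 ^ s * 3 ^ t := by
  intro h
  have h9 : 3 ^ 2 ∣ 3 ^ t :=
    ((by norm_num : Coprime (3 ^ 2) 2).pow_right s).dvd_of_dvd_mul_left h
  have := Nat.le_of_dvd (by positivity) h9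
  interval_cases t <;> omega

theorem exists_odd_prime_dvd_and_sq_dvd_or_gt_three_iff {N : ℕ} (hN : N ≠ 0) :
    (∃ p, p.Prime ∧ p ≠ 2 ∧ p ∣ N ∧ (p ^ 2 ∣ N ∨ 3 < p)) ↔
      ¬ ∃ s t : ℕ, t ≤ 1 ∧ N = 2 ^ s * 3 ^ t := by
  constructor
  · rintro ⟨p, hp, hp2, hpN, hlarge⟩ ⟨s, t, ht, rfl⟩
    have hp3 : p = 3 := by
      rcases (Prime.dvd_mul hp).mp hpN with h | h
      · exact absurd ((prime_dvd_prime_iff_eq hp prime_two).mp (hp.dvd_of_dvd_pow h)) hp2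
      · exact (prime_dvd_prime_iff_eq hp prime_three).mp (hp.dvd_of_dvd_pow h)
    subst hp3
    exact not_sq_dvd_two_pow_mul_three_pow ht (hlarge.resolve_right (lt_irrefl 3))
  · intro h
    by_contra! hsmall
    refine h (exists_eq_two_pow_mul_three_pow hN (fun p hp hpN => ?_) fun h9 => ?_)
    · rcases eq_or_ne p 2 with rfl | hp2
      · norm_num
      · exact (hsmall p hp hp2 hpN).2
    · exact (hsmall 3 prime_three (by norm_num) (dvd_trans (by norm_num) h9)).1 h9

end Nat

section ZsigmondyTwo

variable {a b p : ℕ}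

theorem isZsigmondyPrime_two_iff_of_prime (hp : p.Prime) :
    IsZsigmondyPrime a b 2 p ↔ (p : ℤ) ∣ a + b ∧ ¬ (p : ℤ) ∣ a - b := by
  have hpz : Prime (p : ℤ) := Nat.prime_iff_prime_int.mp hp
  have hfirst : (∀ m : ℕ, 1 ≤ m → m < 2 → ¬ (p : ℤ) ∣ (a : ℤ) ^ m - (b : ℤ) ^ m) ↔
      ¬ (p : ℤ) ∣ a - b :=
    ⟨fun h => by simpa using h 1 le_rfl one_lt_two,
      fun h m hm1 hm2 => by obtain rfl : m = 1 := (by omega); simpa using h⟩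
  rw [IsZsigmondyPrime, hfirst, sq_sub_sq, hpz.dvd_mul]
  constructor
  · rintro ⟨-, hdvd, hnd⟩
    exact ⟨hdvd.resolve_right hnd, hnd⟩
  · rintro ⟨hdvd, hnd⟩
    exact ⟨hp, Or.inl hdvd, hnd⟩

theorem isZsigmondyPrime_two_iff (hco : a.Coprime b) :
    IsZsigmondyPrime a b 2 p ↔ p.Prime ∧ p ≠ 2 ∧ p ∣ a + b := by
  by_cases hp : p.Prime
  · have hp2 : (p : ℤ) ∣ 2 ↔ p = 2 := by
      exact_mod_cast Nat.prime_dvd_prime_iff_eq hp Nat.prime_two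
    have hpab : (p : ℤ) ∣ a + b ↔ p ∣ a + b := by exact_mod_cast Iff.rfl
    rw [isZsigmondyPrime_two_iff_of_prime hp, ← hpab, and_comm (a := p ≠ 2)]
    simp only [hp, true_and]
    exact and_congr_right fun hd => by
      rw [(Nat.isCoprime_iff_coprime.mpr hco).dvd_sub_iff_dvd_two hd, hp2]
  · simp [IsZsigmondyPrime, hp]

theorem IsZsigmondyPrime.sq_dvd_sq_sub_sq_iff (h : IsZsigmondyPrime a b 2 p) :
    (p : ℤ) ^ 2 ∣ (a : ℤ) ^ 2 - (b : ℤ) ^ 2 ↔ p ^ 2 ∣ a + b := by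
  have hnd := ((isZsigmondyPrime_two_iff_of_prime h.1).mp h).2
  rw [sq_sub_sq, ← Int.natCast_dvd_natCast]
  push_cast
  exact ⟨(Nat.prime_iff_prime_int.mp h.1).pow_dvd_of_dvd_mul_right 2 hnd, (·.mul_right _)⟩

theorem isLargeZsigmondyPrime_two_iff (hco : a.Coprime b) :
    IsLargeZsigmondyPrime a b 2 p ↔ p.Prime ∧ p ≠ 2 ∧ p ∣ a + b ∧ (p ^ 2 ∣ a + b ∨ 3 < p) := by
  rw [IsLargeZsigmondyPrime, and_congr_right fun h => or_congr h.sq_dvd_sq_sub_sq_iff Iff.rfl,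
    isZsigmondyPrime_two_iff hco]
  simp only [and_assoc, gt_iff_lt, Nat.reduceAdd]

end ZsigmondyTwo

theorem large_zsigmondy_two_iff_general (a b : ℕ)
    (hco : Nat.Coprime a b) :
    (∃ p : ℕ, IsLargeZsigmondyPrime a b 2 p) ↔
      ¬ ∃ s t : ℕ, t ≤ 1 ∧ a + b = 2 ^ s * 3 ^ t := by
  have hN : a + b ≠ 0 := by
    intro hN
    obtain ⟨rfl, rfl⟩ := Nat.add_eq_zero_iff.mp hN
    simp at hco
  simp only [isLargeZsigmondyPrime_two_iff hco]
  exact Nat.exists_odd_prime_dvd_and_sq_dvd_or_gt_three_iff hN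

theorem large_zsigmondy_two_iff (a b : ℕ) (hb : 1 ≤ b) (hab : b < a)
    (hco : Nat.Coprime a b) :
    (∃ p : ℕ, IsLargeZsigmondyPrime a b 2 p) ↔
      ¬ ∃ s t : ℕ, t ≤ 1 ∧ a + b = 2 ^ s * 3 ^ t :=
  large_zsigmondy_two_iff_general a b hco
end
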